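/- arXiv:2604.05053 — 4 statements merged into one kernel-verified Lean document; each statement's English description precedes it below -/
import Mathlib

section
/- Let R → R' be a faithfully flat homomorphism of commutative rings and M an R-module such that M ⊗_R R' has flat dimension ≤ d over R'. Then M has flat dimension ≤ d over R. -/
/-!
Flat base change is exact and preserves projectivity, so it carries a projective resolution of `N`
to one of `R' ⊗[R] N`; since it also commutes with `M ⊗ -`, this gives
`R' ⊗[R] Tor_i^R(M, N) ≅ Tor_i^{R'}(R' ⊗[R] M, R' ⊗[R] N)`. For `i > d` the right side
vanishes, and a faithfully flat `R'` detects the vanishing of `Tor_i^R(M, N)` after base change.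
-/

open CategoryTheory TensorProduct

namespace CategoryTheory

variable {C C' D D' : Type*} [Category C] [Category C'] [Category D] [Category D']
  [Abelian C] [Abelian C'] [Abelian D] [Abelian D']
  [HasProjectiveResolutions C] [HasProjectiveResolutions C']

noncomputable def Functor.mapLeftDerivedObjIso (F : C ⥤ D) (F' : C' ⥤ D') (G : C ⥤ C')
    (H : D ⥤ D') [F.Additive] [F'.Additive] [G.Additive] [H.PreservesZeroMorphisms]
    [G.PreservesProjectiveObjects] [G.PreservesHomology] [H.PreservesHomology]
    (e : F ⋙ H ≅ G ⋙ F') (n : ℕ) (X : C) :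
    H.obj ((F.leftDerived n).obj X) ≅ (F'.leftDerived n).obj (G.obj X) :=
  let P := projectiveResolution X
  H.mapIso (P.isoLeftDerivedObj F n) ≪≫
    ((((F.mapHomologicalComplex _).obj P.complex).sc n).mapHomologyIso H).symm ≪≫
    (HomologicalComplex.homologyFunctor D' _ n).mapIso
      ((NatIso.mapHomologicalComplex e _).app P.complex) ≪≫
    ((G.mapProjectiveResolution P).isoLeftDerivedObj F' n).symm

end CategoryTheory

namespace TensorProduct

variable (R R' : Type*) [CommRing R] [CommRing R'] [Algebra R R']

noncomputable def baseChangeTensorEquiv (M X : Type*) [AddCommGroup M] [Module R M]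
    [AddCommGroup X] [Module R X] :
    R' ⊗[R] (M ⊗[R] X) ≃ₗ[R'] (R' ⊗[R] M) ⊗[R'] (R' ⊗[R] X) :=
  (AlgebraTensorModule.assoc R R R' R' M X).symm ≪≫ₗ
    (AlgebraTensorModule.cancelBaseChange R R' R' (R' ⊗[R] M) X).symm

variable {M X Y : Type*} [AddCommGroup M] [Module R M] [AddCommGroup X] [Module R X]
  [AddCommGroup Y] [Module R Y]

lemma baseChangeTensorEquiv_comp_baseChange_lTensor (g : X →ₗ[R] Y) :
    (baseChangeTensorEquiv R R' M Y).toLinearMap ∘ₗ (g.lTensor M).baseChange R' =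
      (g.baseChange R').lTensor (R' ⊗[R] M) ∘ₗ
        (baseChangeTensorEquiv R R' M X).toLinearMap := by
  ext r m
  simp [baseChangeTensorEquiv]

end TensorProduct

namespace ModuleCat

universe u

variable (R R' : Type u) [CommRing R] [CommRing R'] [Algebra R R']

noncomputable def baseChange : ModuleCat.{u} R ⥤ ModuleCat.{u} R' where
  obj X := of R' (R' ⊗[R] X)
  map f := ofHom (f.hom.baseChange R')
  map_id _ := hom_ext LinearMap.baseChange_id
  map_comp f g := hom_ext (LinearMap.baseChange_comp f.hom g.hom)

instance : (baseChange R R').Additive where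
  map_add := hom_ext (LinearMap.baseChange_add _ _)

instance : (baseChange R R').PreservesProjectiveObjects where
  projective_obj {X} hX := by
    have := (IsProjective.iff_projective X).2 hX
    exact (IsProjective.iff_projective (of R' (R' ⊗[R] X))).1 inferInstance

instance [Module.Flat R R'] : (baseChange R R').PreservesHomology :=
  (Functor.exact_tfae _).out 1 2 |>.1 fun S hS => by
    rw [ShortComplex.ShortExact.moduleCat_exact_iff_function_exact] at hS ⊢
    exact Module.Flat.lTensor_exact R' hS

noncomputable def tensoringLeftBaseChangeIso (M : ModuleCat.{u} R) :
    (MonoidalCategory.tensoringLeft _).obj M ⋙ baseChange R R' ≅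
      baseChange R R' ⋙ (MonoidalCategory.tensoringLeft _).obj ((baseChange R R').obj M) :=
  NatIso.ofComponents (fun X => (baseChangeTensorEquiv R R' M X).toModuleIso)
    fun g => hom_ext <| by exact baseChangeTensorEquiv_comp_baseChange_lTensor R R' g.hom

noncomputable def torBaseChangeIso [Module.Flat R R'] (M N : ModuleCat.{u} R) (n : ℕ) :
    (baseChange R R').obj (((Tor _ n).obj M).obj N) ≅
      ((Tor _ n).obj ((baseChange R R').obj M)).obj ((baseChange R R').obj N) :=
  Functor.mapLeftDerivedObjIso _ _ _ _ (tensoringLeftBaseChangeIso R R' M) n N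

end ModuleCat

/-- If `R → R'` is faithfully flat and `R' ⊗[R] M` has flat dimension `≤ d`
over `R'`, then `M` has flat dimension `≤ d` over `R`. -/
theorem flatDimension_le_of_faithfullyFlat_descent
    (R R' : Type) [CommRing R] [CommRing R'] [Algebra R R'] [Module.FaithfullyFlat R R']
    (M : Type) [AddCommGroup M] [Module R M] (d : ℕ)
    (h : ∀ i : ℕ, d < i → ∀ N : ModuleCat.{0} R',
      Subsingleton
        (((Tor (ModuleCat R') i).obj (ModuleCat.of R' (R' ⊗[R] M))).obj N)) :
    ∀ i : ℕ, d < i → ∀ N : ModuleCat.{0} R,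
      Subsingleton (((Tor (ModuleCat R) i).obj (ModuleCat.of R M)).obj N) := by
  intro i hi N
  have : Subsingleton (((Tor (ModuleCat R') i).obj ((ModuleCat.baseChange R R').obj (.of R M))).obj
      ((ModuleCat.baseChange R R').obj N)) := h i hi _
  have : Subsingleton (R' ⊗[R] ((Tor (ModuleCat R) i).obj (ModuleCat.of R M)).obj N) :=
    (ModuleCat.torBaseChangeIso R R' (.of R M) N i).toLinearEquiv.toEquiv.subsingleton
  exact Module.FaithfullyFlat.lTensor_reflects_triviality R R' _
end

section
/- Let P be a commutative cancellative monoid with Grothendieck group P^gp and k a commutative ring. Then the monoid algebra k[P^gp] is isomorphic to the localization of k[P] at the multiplicative set of monomials {X^p : p ∈ P}; in particular k[P^gp] is a flat k[P]-algebra. -/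
/-!
Monomials `X^g` are units of `k[G]`, so `k[P] → k[G]` inverts the monoid generated by the
monomials of `k[P]`. Writing `g = ι a - ι b`, the monomial `c X^g` times `X^(ι b)` is the image of
`c X^a`; clearing denominators term by term shows that every element of `k[G]` is a fraction.
Finally `k[P] → k[G]` is injective because `ι` is, and localizations are flat.
-/

namespace AddMonoidAlgebra

theorem isUnit_single_one {k G : Type*} [Semiring k] [AddGroup G] (g : G) :
    IsUnit (single g (1 : k)) :=
  (Group.isUnit (Multiplicative.ofAdd g)).map (of k G)

variable {k P G : Type*} [CommSemiring k] [AddCommMonoid P] [AddCommGroup G]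

theorem isUnit_mapDomainRingHom_of_mem_closure_of' (ι : P →+ G) {s : AddMonoidAlgebra k P}
    (hs : s ∈ Submonoid.closure (Set.range (of' k P))) :
    IsUnit (mapDomainRingHom k ι s) := by
  have hunits : Set.range (of' k P) ⊆
      (IsUnit.submonoid (AddMonoidAlgebra k G)).comap (mapDomainRingHom k ι) := by
    rintro _ ⟨p, rfl⟩
    simpa [IsUnit.mem_submonoid_iff, of'_apply] using isUnit_single_one (k := k) (ι p)
  exact Submonoid.closure_le.2 hunits hs

theorem exists_mul_single_eq_mapDomain (ι : P →+ G) (hgen : ∀ g : G, ∃ a b : P, g = ι a - ι b)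
    (z : AddMonoidAlgebra k G) :
    ∃ (x : AddMonoidAlgebra k P) (b : P), z * single (ι b) 1 = mapDomainRingHom k ι x := by
  induction z using AddMonoidAlgebra.induction with
  | zero => exact ⟨0, 0, by simp⟩
  | single_add g c f _ _ ih =>
    obtain ⟨x, b, hx⟩ := ih
    obtain ⟨a, b', rfl⟩ := hgen g
    refine ⟨single (a + b) c + x * single b' 1, b + b', ?_⟩
    simp only [map_add, map_mul, mapDomainRingHom_apply, mapDomain_single, ← hx, map_add ι,
      add_mul, mul_assoc, single_mul_single, mul_one]
    congr 2
    abel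

theorem isLocalization_mapDomainRingHom (ι : P →+ G) (hinj : Function.Injective ι)
    (hgen : ∀ g : G, ∃ a b : P, g = ι a - ι b) :
    letI : Algebra (AddMonoidAlgebra k P) (AddMonoidAlgebra k G) :=
      (mapDomainRingHom k ι).toAlgebra
    IsLocalization (Submonoid.closure (Set.range (of' k P))) (AddMonoidAlgebra k G) := by
  let : Algebra (AddMonoidAlgebra k P) (AddMonoidAlgebra k G) :=
    (mapDomainRingHom k ι).toAlgebra
  refine ⟨⟨fun s ↦ isUnit_mapDomainRingHom_of_mem_closure_of' ι s.2, fun z ↦ ?_,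
    fun h ↦ ⟨1, by rw [mapDomain_injective hinj h]⟩⟩⟩
  obtain ⟨x, b, hx⟩ := exists_mul_single_eq_mapDomain ι hgen z
  refine ⟨⟨x, ⟨single b 1, Submonoid.subset_closure ⟨b, rfl⟩⟩⟩, ?_⟩
  rw [RingHom.algebraMap_toAlgebra, mapDomainRingHom_apply, mapDomain_single]
  exact hx

end AddMonoidAlgebra

/-- For a cancellative commutative monoid `P` with Grothendieck group `G`
(i.e. `ι : P →+ G` injective and every element of `G` is a difference of elements of `ι(P)`),
the monoid algebra `k[G]` is the localization of `k[P]` at the multiplicative set of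
monomials `{X^p : p ∈ P}`; in particular `k[G]` is flat over `k[P]`. -/
theorem monoidAlgebra_grothendieck_group_isLocalization_and_flat
    (k : Type) [CommRing k] (P : Type) [AddCancelCommMonoid P]
    (G : Type) [AddCommGroup G] (ι : P →+ G)
    (hinj : Function.Injective ι)
    (hgen : ∀ g : G, ∃ a b : P, g = ι a - ι b) :
    letI : Algebra (AddMonoidAlgebra k P) (AddMonoidAlgebra k G) :=
      (AddMonoidAlgebra.mapDomainRingHom k ι).toAlgebra
    IsLocalization
        (Submonoid.closure (Set.range (AddMonoidAlgebra.of' k P)))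
        (AddMonoidAlgebra k G) ∧
      Module.Flat (AddMonoidAlgebra k P) (AddMonoidAlgebra k G) := by
  let : Algebra (AddMonoidAlgebra k P) (AddMonoidAlgebra k G) :=
    (AddMonoidAlgebra.mapDomainRingHom k ι).toAlgebra
  have hloc := AddMonoidAlgebra.isLocalization_mapDomainRingHom (k := k) ι hinj hgen
  exact ⟨hloc, IsLocalization.flat _ (Submonoid.closure (Set.range (AddMonoidAlgebra.of' k P)))⟩
end

section
/- Let k be a field, P a finitely generated commutative cancellative monoid, G an abelian group containing P, and N a finitely generated G-graded k[P]-module (i.e., N = ⊕_{g∈G} N_g with X^p · N_g ⊆ N_{p+g}). Then N admits a finite filtration 0 = N_0 ⊆ N_1 ⊆ ... ⊆ N_r = N by graded submodules such that each subquotient N_j/N_{j-1} is isomorphic, up to a shift of grading, to k[P]/k[𝔭_j] for some prime ideal 𝔭_j ⊆ P. -/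
/-!
Take a graded submodule `M ≠ N` built so far. Since `k[P]` is Noetherian, among the
homogeneous `x ∉ M` there is one whose colon ideal `(M : x)` is maximal; maximality makes
`𝔭 = {q | X^q • x ∈ M}` a prime monoid ideal. As `x` is homogeneous and `ι` is injective,
the homogeneous components of `r • x` are the single terms `r_q X^q • x`, so `(M : x) = k[𝔭]`
and `M + k[P] x` is again graded, with `(M + k[P] x) / M ≅ k[P] / (M : x) = k[P] / k[𝔭]`.
Since `N` is Noetherian, iterating this step from `0` reaches `N`.
-/

open AddMonoidAlgebra DirectSum

structure IsPrimeMonoidIdeal {P : Type*} [Add P] (p : Set P) : Prop where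
  add_mem : ∀ x : P, ∀ s ∈ p, x + s ∈ p
  ne_univ : p ≠ Set.univ
  mem_or_mem : ∀ x y : P, x + y ∈ p → x ∈ p ∨ y ∈ p

namespace Submodule

section Colon

variable {R N : Type*} [CommRing R] [AddCommGroup N] [Module R N]

noncomputable def supSpanSingletonQuotEquiv (M : Submodule R N) (x : N) :
    (↥(M ⊔ R ∙ x) ⧸ M.submoduleOf (M ⊔ R ∙ x)) ≃ₗ[R] R ⧸ M.colon {x} := by
  let φ := (M.submoduleOf (M ⊔ R ∙ x)).mkQ ∘ₗ
    LinearMap.toSpanSingleton R _ ⟨x, mem_sup_right (mem_span_singleton_self x)⟩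
  have hker : LinearMap.ker φ = M.colon {x} := by
    ext r
    rw [LinearMap.mem_ker, mem_colon_singleton]
    exact Quotient.mk_eq_zero _
  have hsurj : Function.Surjective φ := by
    rintro ⟨y, hy⟩
    obtain ⟨m, hm, z, hz, rfl⟩ := mem_sup.mp hy
    obtain ⟨r, rfl⟩ := mem_span_singleton.mp hz
    refine ⟨r, (Quotient.eq _).mpr ?_⟩
    simpa [submoduleOf] using neg_mem hm
  exact (φ.quotKerEquivOfSurjective hsurj).symm ≪≫ₗ quotEquivOfEq _ _ hker

end Colon

section Decomposition

variable {ι A N σ : Type*} [DecidableEq ι] [Semiring A] [AddCommMonoid N] [Module A N]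
  [SetLike σ N] [AddSubmonoidClass σ N] {ℬ : ι → σ} [Decomposition ℬ]

theorem isHomogeneous_bot : (⊥ : Submodule A N).IsHomogeneous ℬ := by
  intro i x hx
  simp [(mem_bot A).mp hx]

theorem exists_homogeneous_notMem_of_ne_top {M : Submodule A N} (hM : M ≠ ⊤) :
    ∃ x, SetLike.IsHomogeneousElem ℬ x ∧ x ∉ M := by
  contrapose! hM
  refine eq_top_iff'.mpr fun y => ?_
  induction y using Decomposition.inductionOn ℬ with
  | zero => exact zero_mem M
  | homogeneous x => exact hM x ⟨_, x.2⟩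
  | add y z hy hz => exact add_mem hy hz

end Decomposition

theorem IsHomogeneous.restrictScalars_eq_iSup_inf {ι k A N : Type*} [DecidableEq ι]
    [Semiring k] [Semiring A] [AddCommMonoid N] [Module k N] [Module A N] [SMul k A]
    [IsScalarTower k A N] {ℬ : ι → Submodule k N} [Decomposition ℬ] {M : Submodule A N}
    (hM : M.IsHomogeneous ℬ) :
    M.restrictScalars k = ⨆ i, M.restrictScalars k ⊓ ℬ i := by
  refine le_antisymm (fun x hx => ?_) (iSup_le fun _ => inf_le_left)
  classical
  rw [← sum_support_decompose ℬ x]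
  exact sum_mem fun i _ => mem_iSup_of_mem i ⟨hM i hx, (decompose ℬ x i).2⟩

end Submodule

namespace AddMonoidAlgebra

theorem of'_add {k P : Type*} [Semiring k] [AddMonoid P] (a b : P) :
    of' k P (a + b) = of' k P a * of' k P b := by
  simp only [of'_apply, single_mul_single, mul_one]

end AddMonoidAlgebra

open Submodule

section PrimeMonoidIdeal

variable {k P N : Type*} [CommSemiring k] [AddCommMonoid P] [AddCommMonoid N] [Module k[P] N]

theorem isPrimeMonoidIdeal_of_colon_maximal {M : Submodule k[P] N} {x : N} {s : Set N}
    (hx : x ∉ M) (hs : ∀ q : P, of' k P q • x ∉ M → of' k P q • x ∈ s)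
    (hmax : ∀ y ∈ s, ¬ M.colon {x} < M.colon {y}) :
    IsPrimeMonoidIdeal {q : P | of' k P q • x ∈ M} where
  add_mem a b hb := by
    change of' k P (a + b) • x ∈ M
    rw [of'_add, mul_smul]
    exact M.smul_mem _ hb
  ne_univ h := hx <| by
    simpa [of'_apply, ← AddMonoidAlgebra.one_def] using Set.eq_univ_iff_forall.mp h 0
  mem_or_mem a b (hab : of' k P (a + b) • x ∈ M) := by
    refine or_iff_not_imp_right.mpr fun hb => ?_
    have hle : M.colon {x} ≤ M.colon {of' k P b • x} := fun r hr => by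
      simpa only [mem_colon_singleton, smul_comm r] using
        M.smul_mem (of' k P b) (mem_colon_singleton.mp hr)
    have heq := eq_of_le_of_not_lt hle (hmax _ (hs b hb))
    have ha : of' k P a ∈ M.colon {of' k P b • x} := by
      simpa only [mem_colon_singleton, smul_smul, ← of'_add] using hab
    exact mem_colon_singleton.mp (heq ▸ ha)

end PrimeMonoidIdeal

section Graded

variable {k G N : Type*} (P : Type*) [AddCommMonoid P] [AddCommGroup N]

def gradedPrimeStep [CommRing k] [DecidableEq G] [Module k N] [Module k[P] N]
    (ℬ : G → Submodule k N) [Decomposition ℬ] : SetRel (Submodule k[P] N) (Submodule k[P] N) :=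
  {(M, M') : Submodule k[P] N × Submodule k[P] N | M ≤ M' ∧ M'.IsHomogeneous ℬ ∧
    ∃ p : Set P, IsPrimeMonoidIdeal p ∧
      Nonempty ((↥M' ⧸ M.submoduleOf M') ≃ₗ[k[P]] k[P] ⧸ Ideal.span (of' k P '' p))}

variable {P}

def GradingCompatible [CommSemiring k] [AddZeroClass G] [Module k N] [Module k[P] N]
    (ι : P →+ G) (ℬ : G → Submodule k N) : Prop :=
  ∀ (p : P) (g : G) (x : N), x ∈ ℬ g → of' k P p • x ∈ ℬ (ι p + g)

theorem isHomogeneous_of_relSeries_gradedPrimeStep [CommRing k] [DecidableEq G] [Module k N]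
    [Module k[P] N] {ℬ : G → Submodule k N} [Decomposition ℬ]
    (s : RelSeries (gradedPrimeStep P ℬ)) (hs : s.head = ⊥) (j : Fin (s.length + 1)) :
    (s j).IsHomogeneous ℬ := by
  induction j using Fin.cases with
  | zero => exact (show s 0 = ⊥ from hs) ▸ isHomogeneous_bot
  | succ j => exact (s.step j).2.1

section CommRing

variable [CommRing k] [AddCommMonoid G] [Module k N] [Module k[P] N] [IsScalarTower k k[P] N]
  {ℬ : G → Submodule k N} {ι : P →+ G} {g : G} {x : N}

theorem GradingCompatible.single_smul_mem (hℬ : GradingCompatible ι ℬ) (hx : x ∈ ℬ g) (q : P)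
    (a : k) : single q a • x ∈ ℬ (ι q + g) := by
  rw [← mul_one a, ← smul_single', ← of'_apply, smul_assoc]
  exact (ℬ _).smul_mem a (hℬ q g x hx)

variable [DecidableEq G] [Decomposition ℬ]

theorem GradingCompatible.decompose_smul_mem_span (hℬ : GradingCompatible ι ℬ) (hx : x ∈ ℬ g)
    (r : k[P]) (h : G) : (decompose ℬ (r • x) h : N) ∈ k[P] ∙ x := by
  induction r using AddMonoidAlgebra.induction_linear with
  | zero => simp
  | add r s hr hs => simpa [add_smul] using add_mem hr hs
  | single q a =>
    have hmem := hℬ.single_smul_mem hx q a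
    by_cases hq : ι q + g = h
    · rw [← hq, decompose_of_mem_same ℬ hmem]
      exact smul_mem _ _ (mem_span_singleton_self x)
    · rw [decompose_of_mem_ne ℬ hmem hq]
      exact zero_mem _

theorem Submodule.IsHomogeneous.sup_span_singleton (hℬ : GradingCompatible ι ℬ)
    {M : Submodule k[P] N} (hM : M.IsHomogeneous ℬ) (hx : x ∈ ℬ g) :
    (M ⊔ k[P] ∙ x).IsHomogeneous ℬ := by
  intro h y hy
  obtain ⟨m, hm, z, hz, rfl⟩ := mem_sup.mp hy
  obtain ⟨r, rfl⟩ := mem_span_singleton.mp hz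
  rw [decompose_add, DirectSum.add_apply, coe_add]
  exact add_mem (mem_sup_left (hM h hm)) (mem_sup_right (hℬ.decompose_smul_mem_span hx r h))

end CommRing

section Field

variable [Field k] [AddCancelCommMonoid G] [DecidableEq G] [Module k N] [Module k[P] N]
  [IsScalarTower k k[P] N] {ℬ : G → Submodule k N} [Decomposition ℬ] {ι : P →+ G}
  {g : G} {x : N}

theorem GradingCompatible.decompose_smul_of_mem (hℬ : GradingCompatible ι ℬ)
    (hι : Function.Injective ι) (hx : x ∈ ℬ g) (r : k[P]) (q : P) :
    (decompose ℬ (r • x) (ι q + g) : N) = r.coeff q • of' k P q • x := by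
  induction r using AddMonoidAlgebra.induction_linear with
  | zero => simp
  | add r s hr hs => simp [add_smul, hr, hs]
  | single a c =>
    have hmem := hℬ.single_smul_mem hx a c
    by_cases ha : a = q
    · subst ha
      rw [decompose_of_mem_same ℬ hmem, of'_apply, ← smul_assoc, smul_single', mul_one]
      simp
    · rw [decompose_of_mem_ne ℬ hmem fun h => ha (hι (add_right_cancel h))]
      simp [coeff_single, ha]

theorem Submodule.IsHomogeneous.colon_singleton_eq_span (hℬ : GradingCompatible ι ℬ)
    (hι : Function.Injective ι) {M : Submodule k[P] N} (hM : M.IsHomogeneous ℬ)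
    (hx : x ∈ ℬ g) : M.colon {x} = Ideal.span (of' k P '' {q | of' k P q • x ∈ M}) := by
  refine le_antisymm (fun r hr => mem_ideal_span_of'_image.mpr fun q hq => ?_) ?_
  · have hcomp := hM (ι q + g) (mem_colon_singleton.mp hr)
    rw [hℬ.decompose_smul_of_mem hι hx] at hcomp
    exact ⟨q, (M.restrictScalars k).smul_mem_iff (Finsupp.mem_support_iff.mp hq) |>.mp hcomp,
      0, (zero_add q).symm⟩
  · rw [Ideal.span_le]
    rintro _ ⟨q, hq, rfl⟩
    exact mem_colon_singleton.mpr hq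

theorem Submodule.IsHomogeneous.exists_gradedPrimeStep [IsNoetherianRing k[P]]
    (hℬ : GradingCompatible ι ℬ) (hι : Function.Injective ι) {M : Submodule k[P] N}
    (hM : M.IsHomogeneous ℬ) (hne : M ≠ ⊤) : ∃ M' > M, (M, M') ∈ gradedPrimeStep P ℬ := by
  let S := {y | SetLike.IsHomogeneousElem ℬ y ∧ y ∉ M}
  obtain ⟨_, ⟨x, ⟨⟨g, hxg⟩, hxM⟩, rfl⟩, hmax⟩ := set_has_maximal_iff_noetherian.mpr ‹_›
    ((fun y => M.colon {y}) '' S) (Set.Nonempty.image _ (exists_homogeneous_notMem_of_ne_top hne))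
  have hprime : IsPrimeMonoidIdeal {q | of' k P q • x ∈ M} :=
    isPrimeMonoidIdeal_of_colon_maximal (s := S) hxM
      (fun q hq => ⟨⟨ι q + g, hℬ q g x hxg⟩, hq⟩) fun y hy => hmax _ ⟨y, hy, rfl⟩
  have hquot := M.supSpanSingletonQuotEquiv x ≪≫ₗ
    quotEquivOfEq _ _ (hM.colon_singleton_eq_span hℬ hι hxg)
  exact ⟨M ⊔ k[P] ∙ x, left_lt_sup.mpr ((span_singleton_le_iff_mem _ _).not.mpr hxM),
    le_sup_left, hM.sup_span_singleton hℬ hxg, _, hprime, ⟨hquot⟩⟩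

theorem exists_relSeries_gradedPrimeStep [IsNoetherianRing k[P]] [Module.Finite k[P] N]
    (hℬ : GradingCompatible ι ℬ) (hι : Function.Injective ι) :
    ∃ s : RelSeries (gradedPrimeStep P ℬ), s.head = ⊥ ∧ s.last = ⊤ :=
  WellFoundedGT.induction_top ⟨⊥, .singleton _ ⊥, rfl, rfl⟩ fun M hne ⟨s, hhead, hlast⟩ => by
    have hM : M.IsHomogeneous ℬ :=
      hlast ▸ isHomogeneous_of_relSeries_gradedPrimeStep s hhead (Fin.last _)
    obtain ⟨M', hlt, hstep⟩ := hM.exists_gradedPrimeStep hℬ hι hne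
    exact ⟨M', hlt, s.snoc M' (hlast ▸ hstep), by simpa using hhead, by simp⟩

end Field

end Graded

/-- prime filtration of graded modules: Let `k` be a field, `P` a finitely
generated cancellative commutative monoid, `G` an abelian group containing `P` (via an
injective `ι : P →+ G`), and `N` a finitely generated `G`-graded `k[P]`-module, with
grading given by `k`-submodules `ℬ g` forming an internal direct sum and satisfying
`X^p • ℬ g ⊆ ℬ (ι p + g)`. Then `N` admits a finite filtration
`0 = N_0 ⊆ N_1 ⊆ ... ⊆ N_r = N` by graded submodules whose subquotients are isomorphic
(as `k[P]`-modules, i.e. up to a shift of grading) to `k[P]/k[𝔭_j]` for prime monoid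
ideals `𝔭_j ⊆ P`. -/
theorem graded_module_prime_filtration
    (k : Type) [Field k] (P : Type) [AddCancelCommMonoid P] [AddMonoid.FG P]
    (G : Type) [AddCommGroup G] [DecidableEq G] (ι : P →+ G)
    (hinj : Function.Injective ι)
    (N : Type) [AddCommGroup N] [Module k N] [Module (AddMonoidAlgebra k P) N]
    [IsScalarTower k (AddMonoidAlgebra k P) N]
    [Module.Finite (AddMonoidAlgebra k P) N]
    (ℬ : G → Submodule k N)
    (hdecomp : DirectSum.IsInternal ℬ)
    (hcompat : ∀ (p : P) (g : G) (x : N), x ∈ ℬ g →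
      (AddMonoidAlgebra.of' k P p) • x ∈ ℬ (ι p + g)) :
    ∃ (r : ℕ) (c : Fin (r + 1) → Submodule (AddMonoidAlgebra k P) N),
      Monotone c ∧ c 0 = ⊥ ∧ c (Fin.last r) = ⊤ ∧
      -- each step of the filtration is a graded submodule
      (∀ j : Fin (r + 1),
        Submodule.restrictScalars k (c j) =
          ⨆ g : G, (Submodule.restrictScalars k (c j) ⊓ ℬ g)) ∧
      -- each subquotient is (up to a shift of the grading) `k[P]/k[𝔭]` for a prime `𝔭`
      (∀ j : Fin r, ∃ p : Set P,
        (∀ x : P, ∀ s ∈ p, x + s ∈ p) ∧ p ≠ Set.univ ∧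
        (∀ x y : P, x + y ∈ p → x ∈ p ∨ y ∈ p) ∧
        Nonempty
          ((↥(c j.succ) ⧸
              Submodule.comap (c j.succ).subtype (c j.castSucc)) ≃ₗ[AddMonoidAlgebra k P]
            (AddMonoidAlgebra k P ⧸ Ideal.span (AddMonoidAlgebra.of' k P '' p)))) := by
  have : IsNoetherianRing k[P] := Algebra.FiniteType.isNoetherianRing k _
  let := hdecomp.chooseDecomposition
  obtain ⟨s, hhead, hlast⟩ := exists_relSeries_gradedPrimeStep hcompat hinj
  have hhom := isHomogeneous_of_relSeries_gradedPrimeStep s hhead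
  refine ⟨s.length, s, Fin.monotone_iff_le_succ.mpr fun j => (s.step j).1, hhead, hlast,
    fun j => (hhom j).restrictScalars_eq_iSup_inf, fun j => ?_⟩
  obtain ⟨p, hp, he⟩ := (s.step j).2.2
  exact ⟨p, hp.add_mem, hp.ne_univ, hp.mem_or_mem, he⟩
end

section
/- Let P → Q be an injective, local, integral homomorphism of finitely generated cancellative commutative monoids and k a field. Then the induced ring map k[P] → k[Q] is flat. -/
/-!
Call `a, b ∈ Q` equivalent when `h p₁ + a = h p₂ + b` for some `p₁, p₂ ∈ P`; the classes are the
fibres of `Q → Q/h(P)`. By integrality, finitely many elements of one class have a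
common lower bound `q` in that class, i.e. they all lie in `h(P) + q`. Choosing such a bound for
each class met by the supports of finitely many elements of `k[Q]` puts these elements in the span
of the monomials `X^q`, and since `h` is injective and translates of `h(P)` by inequivalent
elements are disjoint, these monomials are linearly independent over `k[P]`. So every finite
subset of `k[Q]` lies in a free `k[P]`-submodule, which gives flatness by the equational criterion.
-/

open Function

theorem Module.Flat.of_forall_finset_subset_flat_submodule {R M : Type*} [CommRing R]
    [AddCommGroup M] [Module R M]
    (H : ∀ s : Finset M, ∃ N : Submodule R M, Module.Flat R N ∧ ↑s ⊆ (N : Set M)) :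
    Module.Flat R M := by
  classical
  refine Module.Flat.of_forall_isTrivialRelation fun {l f x} hfx => ?_
  obtain ⟨N, hN, hxN⟩ := H (Finset.univ.image x)
  let x' : Fin l → N := fun i => ⟨x i, hxN (by simp)⟩
  have hfx' : ∑ i, f i • x' i = 0 := Subtype.ext (by simpa [x'] using hfx)
  obtain ⟨n, a, y, hxy, hay⟩ := Module.Flat.isTrivialRelation_of_sum_smul_eq_zero hfx'
  exact ⟨n, a, fun j => y j, fun i => by simpa [x'] using congrArg Subtype.val (hxy i), hay⟩

namespace AddMonoidHom

variable {P Q : Type*} [AddCommMonoid P] [AddCommMonoid Q] (h : P →+ Q)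

def IsIntegral : Prop :=
  ∀ (p₁ p₂ : P) (q₁ q₂ : Q), h p₁ + q₁ = h p₂ + q₂ →
    ∃ (q : Q) (p₃ p₄ : P), q₁ = h p₃ + q ∧ q₂ = h p₄ + q ∧ p₁ + p₃ = p₂ + p₄

def cokernelSetoid : Setoid Q where
  r a b := ∃ p₁ p₂ : P, h p₁ + a = h p₂ + b
  iseqv :=
    { refl := fun _ => ⟨0, 0, rfl⟩
      symm := fun ⟨p₁, p₂, e⟩ => ⟨p₂, p₁, e.symm⟩
      trans := fun ⟨p₁, p₂, e₁⟩ ⟨p₃, p₄, e₂⟩ =>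
        ⟨p₃ + p₁, p₂ + p₄, by
          rw [map_add, map_add, add_assoc, e₁, add_left_comm, e₂, ← add_assoc]⟩ }

variable {h}

theorem IsIntegral.exists_lowerBound (hh : h.IsIntegral) (S : Finset Q) (q₀ : Q) :
    ∃ q, h.cokernelSetoid q q₀ ∧ ∀ s ∈ S, h.cokernelSetoid s q₀ → ∃ p, h p + q = s := by
  classical
  induction S using Finset.induction_on with
  | empty => exact ⟨q₀, h.cokernelSetoid.refl q₀, by simp⟩
  | insert a T _ ih =>
    obtain ⟨q₁, hq₁, hT⟩ := ih
    by_cases ha : h.cokernelSetoid a q₀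
    · obtain ⟨p₁, p₂, e⟩ := h.cokernelSetoid.trans ha (h.cokernelSetoid.symm hq₁)
      obtain ⟨q, p₃, p₄, rfl, rfl, -⟩ := hh p₁ p₂ a q₁ e
      refine ⟨q, h.cokernelSetoid.trans ⟨p₄, 0, by simp⟩ hq₁, fun s hs hs₀ => ?_⟩
      rcases Finset.mem_insert.1 hs with rfl | hs
      · exact ⟨p₃, rfl⟩
      · obtain ⟨p, rfl⟩ := hT s hs hs₀
        exact ⟨p + p₄, by rw [map_add, add_assoc]⟩
    · refine ⟨q₁, hq₁, fun s hs hs₀ => ?_⟩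
      rcases Finset.mem_insert.1 hs with rfl | hs
      · exact absurd hs₀ ha
      · exact hT s hs hs₀

theorem IsIntegral.exists_section_forall_eq_add (hh : h.IsIntegral) (S : Finset Q) :
    ∃ b : Quotient h.cokernelSetoid → Q, (∀ c, Quotient.mk _ (b c) = c) ∧
      ∀ s ∈ S, ∃ p, h p + b (Quotient.mk _ s) = s := by
  have hbound : ∀ c : Quotient h.cokernelSetoid, ∃ q, Quotient.mk _ q = c ∧
      ∀ s ∈ S, Quotient.mk _ s = c → ∃ p, h p + q = s := by
    rintro ⟨q₀⟩
    obtain ⟨q, hq, hS⟩ := hh.exists_lowerBound S q₀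
    exact ⟨q, Quotient.eq.2 hq, fun s hs hsc => hS s hs (Quotient.eq.1 hsc)⟩
  choose b hb hbS using hbound
  exact ⟨b, hb, fun s hs => hbS _ s hs rfl⟩

end AddMonoidHom

namespace AddMonoidAlgebra

theorem mapDomain_mul_single_one {k P Q : Type*} [Semiring k] [Add Q] (f : P → Q)
    (x : AddMonoidAlgebra k P) (q : Q) :
    mapDomain f x * single q 1 = mapDomain (fun p => f p + q) x := by
  induction x using induction_linear with
  | zero => simp [mapDomain_zero]
  | add x y hx hy => rw [mapDomain_add, add_mul, hx, hy, mapDomain_add]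
  | single p r => rw [mapDomain_single, single_mul_single, mul_one, mapDomain_single]

section

variable {k P Q ι : Type*} [CommSemiring k] [AddCommMonoid P] [AddCommMonoid Q] {h : P →+ Q}

theorem mem_span_single_one (b : ι → Q) {x : AddMonoidAlgebra k Q}
    (hx : ∀ t ∈ x.coeff.support, ∃ i p, h p + b i = t) :
    letI := (mapDomainRingHom k h).toAlgebra
    x ∈ Submodule.span (AddMonoidAlgebra k P)
      (Set.range fun i => (single (b i) 1 : AddMonoidAlgebra k Q)) := by
  let := (mapDomainRingHom k h).toAlgebra
  rw [← sum_coeff_single x]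
  refine Submodule.finsuppSum_mem _ _ _ _ fun t ht => ?_
  obtain ⟨i, p, rfl⟩ := hx t (Finsupp.mem_support_iff.2 ht)
  have hsingle : single (h p + b i) (x.coeff (h p + b i)) =
      single p (x.coeff (h p + b i)) • (single (b i) 1 : AddMonoidAlgebra k Q) := by
    rw [Algebra.smul_def, RingHom.algebraMap_toAlgebra, mapDomainRingHom_apply, mapDomain_single,
      single_mul_single, mul_one]
  rw [hsingle]
  exact Submodule.smul_mem _ _ (Submodule.subset_span ⟨i, rfl⟩)

end

section

variable {k P Q ι : Type*} [CommSemiring k] [AddCommMonoid P] [AddCancelCommMonoid Q]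
  {h : P →+ Q}

theorem coeff_sum_mapDomain_mul_single_one_add (hinj : Injective h) {b : ι → Q}
    (hb : Pairwise fun i j => ¬ h.cokernelSetoid (b i) (b j)) (s : Finset ι)
    (g : ι → AddMonoidAlgebra k P) {j : ι} (hj : j ∈ s) (p : P) :
    (∑ i ∈ s, mapDomain h (g i) * single (b i) 1).coeff (h p + b j) = (g j).coeff p := by
  rw [coeff_sum, Finsupp.finsetSum_apply, Finset.sum_eq_single_of_mem j hj]
  · rw [mapDomain_mul_single_one]
    exact Finsupp.mapDomain_apply ((add_left_injective (b j)).comp hinj) _ p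
  · intro i _ hij
    rw [mapDomain_mul_single_one]
    refine Finsupp.mapDomain_of_notMem_range _ _ ?_
    rintro ⟨p', hp'⟩
    exact hb hij ⟨p', p, hp'⟩

theorem linearIndependent_single_one (hinj : Injective h) {b : ι → Q}
    (hb : Pairwise fun i j => ¬ h.cokernelSetoid (b i) (b j)) :
    letI := (mapDomainRingHom k h).toAlgebra
    LinearIndependent (AddMonoidAlgebra k P) fun i => (single (b i) 1 : AddMonoidAlgebra k Q) := by
  let := (mapDomainRingHom k h).toAlgebra
  refine linearIndependent_iff'ₛ.2 fun s f g hfg j hj => ext <| Finsupp.ext fun p => ?_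
  simp only [Algebra.smul_def, RingHom.algebraMap_toAlgebra, mapDomainRingHom_apply] at hfg
  have hcoeff := congrArg (fun x => x.coeff (h p + b j)) hfg
  simpa only [coeff_sum_mapDomain_mul_single_one_add hinj hb s _ hj] using hcoeff

theorem _root_.AddMonoidHom.IsIntegral.exists_free_submodule_superset (hh : h.IsIntegral)
    (hinj : Injective h) (s : Finset (AddMonoidAlgebra k Q)) :
    letI := (mapDomainRingHom k h).toAlgebra
    ∃ N : Submodule (AddMonoidAlgebra k P) (AddMonoidAlgebra k Q),
      Module.Free (AddMonoidAlgebra k P) N ∧ ↑s ⊆ (N : Set (AddMonoidAlgebra k Q)) := by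
  classical
  let := (mapDomainRingHom k h).toAlgebra
  obtain ⟨b, hb, hbS⟩ := hh.exists_section_forall_eq_add (s.biUnion fun x => x.coeff.support)
  have hind : LinearIndependent (AddMonoidAlgebra k P)
      fun c => (single (b c) 1 : AddMonoidAlgebra k Q) :=
    linearIndependent_single_one hinj fun c c' hne hrel =>
      hne (by rw [← hb c, ← hb c']; exact Quotient.eq.2 hrel)
  refine ⟨_, .of_basis (Module.Basis.span hind), fun x hx => mem_span_single_one b fun t ht => ?_⟩
  obtain ⟨p, hp⟩ := hbS t (Finset.mem_biUnion.2 ⟨x, hx, ht⟩)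
  exact ⟨_, p, hp⟩

end

end AddMonoidAlgebra

theorem monoidAlgebra_flat_of_injective_local_integral_general
    (k : Type) [Field k]
    (P Q : Type) [AddCancelCommMonoid P] [AddCancelCommMonoid Q]
    (h : P →+ Q)
    (hinj : Function.Injective h)
    (hintegral : ∀ (p₁ p₂ : P) (q₁ q₂ : Q), h p₁ + q₁ = h p₂ + q₂ →
      ∃ (q : Q) (p₃ p₄ : P),
        q₁ = h p₃ + q ∧ q₂ = h p₄ + q ∧ p₁ + p₃ = p₂ + p₄) :
    letI : Algebra (AddMonoidAlgebra k P) (AddMonoidAlgebra k Q) :=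
      (AddMonoidAlgebra.mapDomainRingHom k h).toAlgebra
    Module.Flat (AddMonoidAlgebra k P) (AddMonoidAlgebra k Q) := by
  let := (AddMonoidAlgebra.mapDomainRingHom k h).toAlgebra
  refine Module.Flat.of_forall_finset_subset_flat_submodule fun s => ?_
  obtain ⟨N, _, hsN⟩ := AddMonoidHom.IsIntegral.exists_free_submodule_superset hintegral hinj s
  exact ⟨N, inferInstance, hsN⟩

/-- For an injective, local, integral homomorphism `h : P → Q` of finitely
generated cancellative commutative monoids and a field `k`, the induced map
`k[P] → k[Q]` of monoid algebras is flat. -/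
theorem monoidAlgebra_flat_of_injective_local_integral
    (k : Type) [Field k]
    (P Q : Type) [AddCancelCommMonoid P] [AddCancelCommMonoid Q]
    [AddMonoid.FG P] [AddMonoid.FG Q]
    (h : P →+ Q)
    (hinj : Function.Injective h)
    (hlocal : ∀ p : P, IsAddUnit (h p) → IsAddUnit p)
    (hintegral : ∀ (p₁ p₂ : P) (q₁ q₂ : Q), h p₁ + q₁ = h p₂ + q₂ →
      ∃ (q : Q) (p₃ p₄ : P),
        q₁ = h p₃ + q ∧ q₂ = h p₄ + q ∧ p₁ + p₃ = p₂ + p₄) :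
    letI : Algebra (AddMonoidAlgebra k P) (AddMonoidAlgebra k Q) :=
      (AddMonoidAlgebra.mapDomainRingHom k h).toAlgebra
    Module.Flat (AddMonoidAlgebra k P) (AddMonoidAlgebra k Q) :=
  monoidAlgebra_flat_of_injective_local_integral_general k P Q h hinj hintegral
end
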